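/- arXiv:2509.06128 — 5 statements merged into one kernel-verified Lean document; each statement's English description precedes it below -/
import Mathlib

section
/- For every integer k ≥ 1 and every τ in the complex upper half-plane ℍ, the lattice theta function satisfies Θ_{Γ_{8k}}(τ) = (1/2)·(θ₂(τ)^{8k} + θ₃(τ)^{8k} + θ₄(τ)^{8k}). -/
open scoped Real

/-- The Jacobi theta function `θ₂`. -/
noncomputable def theta2 (τ : ℂ) : ℂ :=
  ∑' n : ℤ, Complex.exp (Real.pi * Complex.I * τ * ((n : ℂ) + 1 / 2) ^ 2)

/-- The Jacobi theta function `θ₃`. -/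
noncomputable def theta3 (τ : ℂ) : ℂ :=
  ∑' n : ℤ, Complex.exp (Real.pi * Complex.I * τ * (n : ℂ) ^ 2)

/-- The Jacobi theta function `θ₄`. -/
noncomputable def theta4 (τ : ℂ) : ℂ :=
  ∑' n : ℤ, (-1 : ℂ) ^ n * Complex.exp (Real.pi * Complex.I * τ * (n : ℂ) ^ 2)

/-- The lattice `Γ_{8k} ⊂ ℝ^{8k}`. -/
def GammaLattice (k : ℕ) : Set (Fin (8 * k) → ℝ) :=
  {x | ((∀ i, ∃ m : ℤ, x i = m) ∨ (∀ i, ∃ m : ℤ, x i = m + 1 / 2)) ∧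
    ∃ m : ℤ, (∑ i, x i) = 2 * m}

/-- The theta function of the lattice `Γ_{8k}`. -/
noncomputable def ThetaGamma (k : ℕ) (τ : ℂ) : ℂ :=
  ∑' x : GammaLattice k, Complex.exp (Real.pi * Complex.I * τ * ((∑ i, (x.1 i) ^ 2 : ℝ) : ℂ))

/-!
Write `D_N` for the integer vectors with even coordinate sum; then `Γ_{8k}` is the disjoint union
of `D_{8k}` and `D_{8k} + (1/2, …, 1/2)` (the shift has even coordinate sum `4k`). Expanding
powers of the one-variable series, `θ₃^N` and `θ₂^N` are the theta series of `ℤ^N` and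
`(ℤ + 1/2)^N`, and `θ₄^N` is that of `ℤ^N` twisted by `(-1)^{∑ xᵢ}`, so `θ₃^N + θ₄^N` is twice
the theta series of `D_N`. On the shifted coset the twisted series vanishes, since reflecting one
coordinate about `-1/2` is an involution reversing the sign, hence `θ₂^N` is twice the theta
series of `D_N + (1/2, …, 1/2)`.
-/

open Complex Function

noncomputable def thetaTerm (τ : ℂ) (t : ℝ) : ℂ := exp (π * I * τ * t)

lemma norm_thetaTerm (τ : ℂ) (t : ℝ) : ‖thetaTerm τ t‖ = Real.exp (-π * τ.im * t) := by
  rw [thetaTerm, norm_exp, show π * I * τ * t = ((π * t : ℝ) : ℂ) * (τ * I) by push_cast; ring,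
    re_ofReal_mul, mul_I_re]
  ring_nf

lemma thetaTerm_sum (τ : ℂ) {ι : Type*} (s : Finset ι) (t : ι → ℝ) :
    thetaTerm τ (∑ i ∈ s, t i) = ∏ i ∈ s, thetaTerm τ (t i) := by
  simp only [thetaTerm, ← exp_sum, ofReal_sum, Finset.mul_sum]

lemma summable_norm_thetaTerm_add_sq {τ : ℂ} (hτ : 0 < τ.im) (c : ℝ) :
    Summable fun n : ℤ => ‖thetaTerm τ (((n : ℝ) + c) ^ 2)‖ := by
  have hb := summable_pow_mul_jacobiTheta₂_term_bound (τ.im * |c|) hτ 0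
  simp only [pow_zero, one_mul] at hb
  refine hb.of_nonneg_of_le (fun n => norm_nonneg _) fun n => ?_
  rw [norm_thetaTerm, Int.cast_abs]
  gcongr Real.exp ?_
  have key : (n : ℝ) ^ 2 - 2 * |c| * |(n : ℝ)| ≤ ((n : ℝ) + c) ^ 2 := by
    nlinarith [neg_abs_le (c * n), abs_mul c n, sq_nonneg c]
  nlinarith [mul_le_mul_of_nonneg_left key hτ.le, Real.pi_pos]

lemma zpow_sum₀ {G₀ ι : Type*} [CommGroupWithZero G₀] {a : G₀} (ha : a ≠ 0) (s : Finset ι)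
    (f : ι → ℤ) : a ^ (∑ i ∈ s, f i) = ∏ i ∈ s, a ^ f i := by
  induction s using Finset.cons_induction with
  | empty => simp
  | cons i s hi ih => rw [Finset.sum_cons, Finset.prod_cons, zpow_add₀ ha, ih]

section PowTsum

variable {ι 𝕜 : Type*} [NormedField 𝕜] {g : ι → 𝕜}

lemma summable_norm_prod_pi (hg : Summable fun n => ‖g n‖) (N : ℕ) :
    Summable fun x : Fin N → ι => ‖∏ i, g (x i)‖ := by
  induction N with
  | zero => exact .of_finite
  | succ N ih =>
    rw [← (Fin.consEquiv fun _ => ι).summable_iff]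
    refine (hg.mul_of_nonneg ih (fun _ => norm_nonneg _) fun _ => norm_nonneg _).congr fun z => ?_
    simp [Fin.consEquiv, Fin.prod_univ_succ]

lemma tsum_pow_eq_tsum_prod_pi [CompleteSpace 𝕜] (hg : Summable fun n => ‖g n‖) (N : ℕ) :
    (∑' n, g n) ^ N = ∑' x : Fin N → ι, ∏ i, g (x i) := by
  induction N with
  | zero => simp
  | succ N ih =>
    rw [pow_succ', ih, tsum_mul_tsum_of_summable_norm hg (summable_norm_prod_pi hg N),
      ← (Fin.consEquiv fun _ => ι).tsum_eq]
    simp [Fin.consEquiv, Fin.prod_univ_succ]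

end PowTsum

lemma tsum_eq_zero_of_involutive {α E : Type*} [AddCommGroup E] [TopologicalSpace E]
    [IsTopologicalAddGroup E] [T2Space E] [IsAddTorsionFree E] {f : α → E} {T : α → α}
    (hT : Involutive T) (hf : ∀ x, f (T x) = -f x) : ∑' x, f x = 0 := by
  have h := (hT.toPerm T).tsum_eq f
  rw [Involutive.coe_toPerm, tsum_congr hf, tsum_neg] at h
  exact neg_eq_self.mp h

def latticeD (N : ℕ) : Set (Fin N → ℤ) := {x | Even (∑ i, x i)}

lemma tsum_add_tsum_neg_one_zpow_mul {N : ℕ} {f : (Fin N → ℤ) → ℂ} (hf : Summable f) :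
    ∑' x, f x + ∑' x, (-1 : ℂ) ^ (∑ i, x i) * f x = 2 * ∑' x : latticeD N, f x := by
  have hsign : Summable fun x : Fin N → ℤ => (-1 : ℂ) ^ (∑ i, x i) * f x :=
    .of_norm <| (summable_norm_iff.mpr hf).congr fun x => by simp [norm_zpow]
  have hsupp : support (fun x : Fin N → ℤ => (1 + (-1 : ℂ) ^ (∑ i, x i)) * f x) ⊆ latticeD N := by
    intro x hx
    by_contra hodd
    simp [(Int.not_even_iff_odd.mp hodd).neg_one_zpow] at hx
  rw [← hf.tsum_add hsign, ← tsum_mul_left]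
  trans ∑' x : latticeD N, (1 + (-1 : ℂ) ^ (∑ i, x.1 i)) * f x
  · rw [tsum_subtype_eq_of_support_subset hsupp]
    exact tsum_congr fun x => by ring
  · exact tsum_congr fun x => by rw [x.2.neg_one_zpow]; ring

lemma tsum_neg_one_zpow_mul_thetaTerm_half_eq_zero (τ : ℂ) {ι : Type*} [Fintype ι]
    [DecidableEq ι] (i₀ : ι) :
    ∑' x : ι → ℤ, (-1 : ℂ) ^ (∑ i, x i) * thetaTerm τ (∑ i, ((x i : ℝ) + 1 / 2) ^ 2) = 0 := by
  set T : (ι → ℤ) → ι → ℤ := fun x => update x i₀ (-x i₀ - 1)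
  have hT : Involutive T := fun x => by simp [T]
  have hsum : ∀ x, ∑ i, T x i = ∑ i, x i - (2 * x i₀ + 1) := fun x => by
    simp only [T, Finset.sum_update_of_mem (Finset.mem_univ i₀),
      ← Finset.add_sum_erase _ _ (Finset.mem_univ i₀), Finset.sdiff_singleton_eq_erase]
    ring
  have hsq : ∀ x, ∑ i, ((T x i : ℝ) + 1 / 2) ^ 2 = ∑ i, ((x i : ℝ) + 1 / 2) ^ 2 := fun x =>
    Finset.sum_congr rfl fun i _ => by
      rcases eq_or_ne i i₀ with rfl | hi
      · simp only [T, update_self]; push_cast; ring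
      · simp only [T, update_of_ne hi]
  refine tsum_eq_zero_of_involutive hT fun x => ?_
  rw [hsum, hsq, zpow_sub₀ (by norm_num), zpow_add₀ (by norm_num), (even_two_mul _).neg_one_zpow]
  ring

lemma summable_thetaTerm_sum_add_sq {τ : ℂ} (hτ : 0 < τ.im) (c : ℝ) (N : ℕ) :
    Summable fun x : Fin N → ℤ => thetaTerm τ (∑ i, ((x i : ℝ) + c) ^ 2) := by
  refine .of_norm ((summable_norm_prod_pi (summable_norm_thetaTerm_add_sq hτ c) N).congr ?_)
  simp [thetaTerm_sum]

lemma theta2_pow {τ : ℂ} (hτ : 0 < τ.im) (N : ℕ) :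
    theta2 τ ^ N = ∑' x : Fin N → ℤ, thetaTerm τ (∑ i, ((x i : ℝ) + 1 / 2) ^ 2) := by
  have h : theta2 τ = ∑' n : ℤ, thetaTerm τ (((n : ℝ) + 1 / 2) ^ 2) :=
    tsum_congr fun n => by rw [thetaTerm]; push_cast; ring_nf
  rw [h, tsum_pow_eq_tsum_prod_pi (summable_norm_thetaTerm_add_sq hτ _)]
  simp [thetaTerm_sum]

lemma theta3_pow {τ : ℂ} (hτ : 0 < τ.im) (N : ℕ) :
    theta3 τ ^ N = ∑' x : Fin N → ℤ, thetaTerm τ (∑ i, (x i : ℝ) ^ 2) := by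
  have h : theta3 τ = ∑' n : ℤ, thetaTerm τ ((n : ℝ) ^ 2) :=
    tsum_congr fun n => by rw [thetaTerm]; push_cast; ring_nf
  rw [h, tsum_pow_eq_tsum_prod_pi (by simpa using summable_norm_thetaTerm_add_sq hτ 0)]
  simp [thetaTerm_sum]

lemma theta4_pow {τ : ℂ} (hτ : 0 < τ.im) (N : ℕ) :
    theta4 τ ^ N =
      ∑' x : Fin N → ℤ, (-1 : ℂ) ^ (∑ i, x i) * thetaTerm τ (∑ i, (x i : ℝ) ^ 2) := by
  have h : theta4 τ = ∑' n : ℤ, (-1 : ℂ) ^ n * thetaTerm τ ((n : ℝ) ^ 2) :=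
    tsum_congr fun n => by rw [thetaTerm]; push_cast; ring_nf
  have hg : Summable fun n : ℤ => ‖(-1 : ℂ) ^ n * thetaTerm τ ((n : ℝ) ^ 2)‖ := by
    simpa [norm_zpow] using summable_norm_thetaTerm_add_sq hτ 0
  rw [h, tsum_pow_eq_tsum_prod_pi hg]
  simp [Finset.prod_mul_distrib, thetaTerm_sum, zpow_sum₀]

noncomputable def gammaLatticeParam (k : ℕ) :
    latticeD (8 * k) ⊕ latticeD (8 * k) → Fin (8 * k) → ℝ :=
  Sum.elim (fun x i => x.1 i) (fun x i => x.1 i + 1 / 2)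

lemma intCast_ne_intCast_add_half (m n : ℤ) : (m : ℝ) ≠ n + 1 / 2 := by
  intro h
  have : 2 * (m - n) = 1 := by exact_mod_cast (by linarith : (2 * (m - n) : ℝ) = 1)
  omega

lemma gammaLatticeParam_injective {k : ℕ} (hk : 1 ≤ k) : Injective (gammaLatticeParam k) := by
  have i₀ : Fin (8 * k) := ⟨0, by omega⟩
  rintro (x | x) (y | y) h <;>
    simp only [gammaLatticeParam, Sum.elim_inl, Sum.elim_inr, funext_iff] at h
  · exact congrArg _ (Subtype.ext (funext fun i => by exact_mod_cast h i))
  · exact absurd (h i₀) (intCast_ne_intCast_add_half _ _)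
  · exact absurd (h i₀).symm (intCast_ne_intCast_add_half _ _)
  · exact congrArg _ (Subtype.ext (funext fun i => by exact_mod_cast add_right_cancel (h i)))

lemma sum_intCast_add_half {k : ℕ} (x : Fin (8 * k) → ℤ) :
    ∑ i, ((x i : ℝ) + 1 / 2) = ((∑ i, x i : ℤ) : ℝ) + 4 * k := by
  simp only [Finset.sum_add_distrib, Int.cast_sum, Finset.sum_const, Finset.card_univ,
    Fintype.card_fin, nsmul_eq_mul]
  push_cast
  ring

lemma range_gammaLatticeParam (k : ℕ) : Set.range (gammaLatticeParam k) = GammaLattice k := by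
  ext y
  constructor
  · rintro ⟨x | x, rfl⟩ <;> obtain ⟨m, hm⟩ := x.2
    · refine ⟨.inl fun i => ⟨x.1 i, rfl⟩, m, ?_⟩
      simp only [gammaLatticeParam, Sum.elim_inl, ← Int.cast_sum, hm]
      push_cast
      ring
    · refine ⟨.inr fun i => ⟨x.1 i, rfl⟩, m + 2 * k, ?_⟩
      simp only [gammaLatticeParam, Sum.elim_inr, sum_intCast_add_half, hm]
      push_cast
      ring
  · rintro ⟨hy | hy, m, hm⟩ <;> choose f hf using hy <;> simp only [hf] at hm
    · rw [← Int.cast_sum] at hm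
      have hf' : ∑ i, f i = 2 * m := by exact_mod_cast hm
      exact ⟨.inl ⟨f, m, by omega⟩, funext fun i => (hf i).symm⟩
    · rw [sum_intCast_add_half] at hm
      have hf' : ∑ i, f i = 2 * m - 4 * k := by
        exact_mod_cast (by linarith : ((∑ i, f i : ℤ) : ℝ) = 2 * m - 4 * k)
      exact ⟨.inr ⟨f, m - 2 * k, by omega⟩, funext fun i => (hf i).symm⟩

lemma theta3_pow_add_theta4_pow {τ : ℂ} (hτ : 0 < τ.im) (N : ℕ) :
    theta3 τ ^ N + theta4 τ ^ N =
      2 * ∑' x : latticeD N, thetaTerm τ (∑ i, (x.1 i : ℝ) ^ 2) := by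
  rw [theta3_pow hτ, theta4_pow hτ]
  exact tsum_add_tsum_neg_one_zpow_mul (by simpa using summable_thetaTerm_sum_add_sq hτ 0 N)

lemma theta2_pow_eq_tsum_latticeD {τ : ℂ} (hτ : 0 < τ.im) {N : ℕ} (hN : 0 < N) :
    theta2 τ ^ N = 2 * ∑' x : latticeD N, thetaTerm τ (∑ i, ((x.1 i : ℝ) + 1 / 2) ^ 2) := by
  rw [theta2_pow hτ, ← tsum_add_tsum_neg_one_zpow_mul (summable_thetaTerm_sum_add_sq hτ _ N),
    tsum_neg_one_zpow_mul_thetaTerm_half_eq_zero τ (⟨0, hN⟩ : Fin N), add_zero]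

lemma thetaGamma_eq_tsum_latticeD {k : ℕ} (hk : 1 ≤ k) {τ : ℂ} (hτ : 0 < τ.im) :
    ThetaGamma k τ = ∑' x : latticeD (8 * k), thetaTerm τ (∑ i, (x.1 i : ℝ) ^ 2) +
      ∑' x : latticeD (8 * k), thetaTerm τ (∑ i, ((x.1 i : ℝ) + 1 / 2) ^ 2) := by
  change ∑' y : GammaLattice k, thetaTerm τ (∑ i, y.1 i ^ 2) = _
  rw [← range_gammaLatticeParam,
    tsum_range (fun y => thetaTerm τ (∑ i, y i ^ 2)) (gammaLatticeParam_injective hk)]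
  have hsummable : Summable fun x : Fin (8 * k) → ℤ => thetaTerm τ (∑ i, (x i : ℝ) ^ 2) := by
    simpa using summable_thetaTerm_sum_add_sq hτ 0 (8 * k)
  exact Summable.tsum_sum (hsummable.subtype _) ((summable_thetaTerm_sum_add_sq hτ _ _).subtype _)

theorem stmt0 (k : ℕ) (hk : 1 ≤ k) (τ : ℂ) (hτ : 0 < τ.im) :
    ThetaGamma k τ =
      (1 / 2) * (theta2 τ ^ (8 * k) + theta3 τ ^ (8 * k) + theta4 τ ^ (8 * k)) := by
  rw [add_assoc, theta3_pow_add_theta4_pow hτ, theta2_pow_eq_tsum_latticeD hτ (by omega),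
    thetaGamma_eq_tsum_latticeD hk hτ]
  ring
end

section
/- Let k ≥ 3 be an integer and set ℓ = ⌊k/3⌋. For every j with 1 ≤ j ≤ ℓ, there exists φ in the open interval (π(k−ℓ+j−1)/k, π(k−ℓ+j)/k) such that p_{2k}(1 + e^{iφ}) = 0; in particular, p_{2k} has at least ℓ zeros on the arc {1 + e^{iφ} : φ ∈ [2π/3, π]}. -/
/-!
Writing `z = 1 + e^{iφ} = e^{iφ/2} · 2cos(φ/2)` gives
`p_{2k}(z) = e^{ikφ} (2cos(kφ) + (2cos(φ/2))^{2k})`. For `φ ∈ [2π/3, π]` the second summand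
lies in `[0, 1]`, so at the grid points `φ = πm/k` the real factor has the sign of `(-1)^m`, and the
intermediate value theorem yields a zero in each of the last `⌊k/3⌋` grid intervals of `[0, π]`,
all of which lie in `[2π/3, π]`.
-/

open scoped Real

open Complex Set

/-- The polynomial `p_{2k}(z) = 1 + z^{2k} + (1 - z)^{2k}` (as a function on `ℂ`). -/
def pFun (k : ℕ) (z : ℂ) : ℂ := 1 + z ^ (2 * k) + (1 - z) ^ (2 * k)

noncomputable def arcProfile (k : ℕ) (φ : ℝ) : ℝ :=
  2 * Real.cos (k * φ) + (2 * Real.cos (φ / 2)) ^ (2 * k)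

lemma pFun_one_add_sq (k : ℕ) {w : ℂ} (hw : w ≠ 0) :
    pFun k (1 + w ^ 2) = w ^ (2 * k) * (w ^ (2 * k) + w⁻¹ ^ (2 * k) + (w + w⁻¹) ^ (2 * k)) := by
  have hsum : 1 + w ^ 2 = w * (w + w⁻¹) := by field_simp; ring
  have hdiff : 1 - (1 + w ^ 2) = -w ^ 2 := by ring
  rw [pFun, hdiff, hsum, (even_two_mul k).neg_pow, mul_pow, ← pow_mul, mul_comm 2 (2 * k),
    pow_mul, inv_pow]
  field_simp
  ring

lemma pFun_one_add_exp_mul_I (k : ℕ) (φ : ℝ) :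
    pFun k (1 + exp (φ * I)) = exp ((k * φ : ℝ) * I) * arcProfile k φ := by
  set w := exp ((φ / 2 : ℝ) * I)
  have hw_sq : exp (φ * I) = w ^ 2 := by
    rw [← exp_nat_mul]; push_cast; ring_nf
  have hw_pow : exp ((k * φ : ℝ) * I) = w ^ (2 * k) := by
    rw [← exp_nat_mul]; push_cast; ring_nf
  have hw_inv_pow : exp (-((k * φ : ℝ) * I)) = w⁻¹ ^ (2 * k) := by
    rw [← exp_neg, ← exp_nat_mul]; push_cast; ring_nf
  have hprofile : (arcProfile k φ : ℂ) = w ^ (2 * k) + w⁻¹ ^ (2 * k) + (w + w⁻¹) ^ (2 * k) := by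
    have hcos_half : 2 * cos ((φ / 2 : ℝ) : ℂ) = w + w⁻¹ := by rw [two_cos, neg_mul, exp_neg]
    have hcos : 2 * cos ((k * φ : ℝ) : ℂ) = w ^ (2 * k) + w⁻¹ ^ (2 * k) := by
      rw [two_cos, hw_pow, neg_mul, hw_inv_pow]
    rw [← hcos_half, ← hcos, arcProfile]
    push_cast
    ring
  rw [hw_sq, hw_pow, hprofile, pFun_one_add_sq k (exp_ne_zero _)]

lemma pFun_one_add_exp_mul_I_eq_zero_iff (k : ℕ) (φ : ℝ) :
    pFun k (1 + exp (φ * I)) = 0 ↔ arcProfile k φ = 0 := by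
  simp [pFun_one_add_exp_mul_I, exp_ne_zero]

lemma two_cos_half_pow_mem_Icc (k : ℕ) {φ : ℝ} (hφ : φ ∈ Icc (2 * π / 3) π) :
    (2 * Real.cos (φ / 2)) ^ (2 * k) ∈ Icc (0 : ℝ) 1 := by
  obtain ⟨h1, h2⟩ := hφ
  have hcos_nonneg : 0 ≤ Real.cos (φ / 2) :=
    Real.cos_nonneg_of_mem_Icc ⟨by linarith [Real.pi_pos], by linarith⟩
  have hcos_le : Real.cos (φ / 2) ≤ 1 / 2 := by
    rw [← Real.cos_pi_div_three]
    exact Real.cos_le_cos_of_nonneg_of_le_pi (by positivity) (by linarith) (by linarith)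
  exact ⟨by positivity, pow_le_one₀ (by positivity) (by linarith)⟩

lemma pi_mul_div_mem_Icc {k m : ℕ} (hk : 0 < k) (hm₁ : 2 * k ≤ 3 * m) (hm₂ : m ≤ k) :
    π * m / k ∈ Icc (2 * π / 3) π := by
  have hk' : (0 : ℝ) < k := by exact_mod_cast hk
  have hm₁' : (2 * k : ℝ) ≤ 3 * m := by exact_mod_cast hm₁
  have hm₂' : (m : ℝ) ≤ k := by exact_mod_cast hm₂
  constructor
  · rw [div_le_div_iff₀ (by norm_num) hk']; nlinarith [Real.pi_pos]
  · rw [div_le_iff₀ hk']; nlinarith [Real.pi_pos]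

lemma neg_one_pow_mul_arcProfile_pos {k m : ℕ} (hk : 0 < k) (hm₁ : 2 * k ≤ 3 * m) (hm₂ : m ≤ k) :
    0 < (-1) ^ m * arcProfile k (π * m / k) := by
  have hkφ : (k : ℝ) * (π * m / k) = m * π := by field_simp
  have hcos : Real.cos (m * π) = (-1) ^ m := by simpa using Real.cos_nat_mul_pi_sub 0 m
  obtain ⟨h0, h1⟩ := two_cos_half_pow_mem_Icc k (pi_mul_div_mem_Icc hk hm₁ hm₂)
  rw [arcProfile, hkφ, hcos]
  rcases neg_one_pow_eq_or ℝ m with h | h <;> rw [h] <;> linarith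

lemma exists_arcProfile_eq_zero {k m : ℕ} (hm₁ : 2 * k ≤ 3 * m) (hm₂ : m < k) :
    ∃ φ ∈ Ioo (π * m / k) (π * (m + 1) / k), arcProfile k φ = 0 := by
  have hk : 0 < k := by omega
  have hleft := neg_one_pow_mul_arcProfile_pos hk hm₁ hm₂.le
  have hright := neg_one_pow_mul_arcProfile_pos hk (m := m + 1) (by omega) hm₂
  rw [pow_succ, mul_neg_one, neg_mul, neg_pos] at hright
  push_cast at hright
  have hcont : Continuous fun φ => (-1) ^ m * arcProfile k φ := by unfold arcProfile; fun_prop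
  have hle : π * m / k ≤ π * (m + 1) / k := by gcongr; linarith
  obtain ⟨φ, hφ, hzero⟩ := intermediate_value_Ioo' hle hcont.continuousOn ⟨hright, hleft⟩
  exact ⟨φ, hφ, by simpa using hzero⟩

lemma injOn_one_add_exp_mul_I {a b : ℝ} (h : b - a < 2 * π) :
    InjOn (fun φ : ℝ => 1 + exp (φ * I)) (Icc a b) := by
  intro x hx y hy hxy
  exact Circle.exp_injOn_Icc h hx hy (Subtype.ext (by simpa [Circle.coe_exp] using hxy))

lemma pFun_zeros_finite (k : ℕ) : {z : ℂ | pFun k z = 0}.Finite := by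
  open Polynomial in
  have hne : (1 + X ^ (2 * k) + (1 - X) ^ (2 * k) : ℂ[X]) ≠ 0 := by
    intro h
    have h0 := congrArg (eval 0) h
    simp only [eval_add, eval_one, eval_pow, eval_X, eval_sub, sub_zero, one_pow] at h0
    rcases eq_or_ne k 0 with rfl | hk
    · norm_num at h0
    · norm_num [hk] at h0
  refine (finite_setOfPred_isRoot hne).subset fun z hz => ?_
  simpa [pFun] using hz

lemma exists_arc_zero_of_mem_Icc {k j : ℕ} (hj : j ∈ Icc 1 (k / 3)) :
    ∃ φ : ℝ, π * ((k : ℝ) - ((k / 3 : ℕ) : ℝ) + j - 1) / k < φ ∧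
      φ < π * ((k : ℝ) - ((k / 3 : ℕ) : ℝ) + j) / k ∧
      φ ∈ Icc (2 * π / 3) π ∧ pFun k (1 + exp (φ * I)) = 0 := by
  obtain ⟨hj₁, hj₂⟩ := hj
  set m := k - k / 3 + j - 1
  have hm₁ : 2 * k ≤ 3 * m := by omega
  have hm₂ : m < k := by omega
  have hm : (m : ℝ) = k - (k / 3 : ℕ) + j - 1 := by
    have : ((m + 1 + k / 3 : ℕ) : ℝ) = (k + j : ℕ) := by congr 1; omega
    push_cast at this
    linarith
  obtain ⟨φ, ⟨hlo, hhi⟩, hφ⟩ := exists_arcProfile_eq_zero hm₁ hm₂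
  have harc : Icc (π * m / k) (π * (m + 1) / k) ⊆ Icc (2 * π / 3) π := by
    refine ordConnected_Icc.out (pi_mul_div_mem_Icc (by omega) hm₁ hm₂.le) ?_
    simpa using pi_mul_div_mem_Icc (m := m + 1) (by omega) (by omega) hm₂
  refine ⟨φ, by rwa [← hm], ?_, harc ⟨hlo.le, hhi.le⟩,
    (pFun_one_add_exp_mul_I_eq_zero_iff k φ).2 hφ⟩
  rwa [show (k : ℝ) - (k / 3 : ℕ) + j = m + 1 by linarith]

theorem stmt7_general (k : ℕ) :
    (∀ j : ℕ, 1 ≤ j → j ≤ k / 3 →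
      ∃ φ : ℝ,
        Real.pi * ((k : ℝ) - ((k / 3 : ℕ) : ℝ) + (j : ℝ) - 1) / (k : ℝ) < φ ∧
        φ < Real.pi * ((k : ℝ) - ((k / 3 : ℕ) : ℝ) + (j : ℝ)) / (k : ℝ) ∧
        pFun k (1 + Complex.exp (φ * Complex.I)) = 0) ∧
    (k / 3 : ℕ) ≤
      {z : ℂ | (∃ φ ∈ Set.Icc (2 * Real.pi / 3) Real.pi,
        z = 1 + Complex.exp (φ * Complex.I)) ∧ pFun k z = 0}.ncard := by
  have hzero := fun j (hj : j ∈ Icc 1 (k / 3)) => exists_arc_zero_of_mem_Icc hj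
  refine ⟨fun j hj₁ hj₂ => ?_, ?_⟩
  · obtain ⟨φ, hlo, hhi, -, hφ⟩ := hzero j ⟨hj₁, hj₂⟩
    exact ⟨φ, hlo, hhi, hφ⟩
  choose! ψ hψ using hzero
  have hψ_mono : StrictMonoOn ψ (Icc 1 (k / 3)) := by
    intro i hi j hj hij
    have hij' : (i : ℝ) + 1 ≤ j := by exact_mod_cast hij
    calc ψ i < π * ((k : ℝ) - ((k / 3 : ℕ) : ℝ) + i) / k := (hψ i hi).2.1
      _ ≤ π * ((k : ℝ) - ((k / 3 : ℕ) : ℝ) + j - 1) / k := by gcongr; linarith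
      _ < ψ j := (hψ j hj).1
  have hinj := (injOn_one_add_exp_mul_I (a := 2 * π / 3) (b := π) (by linarith [Real.pi_pos])).comp
    hψ_mono.injOn fun j hj => (hψ j hj).2.2.1
  calc k / 3 = (Icc 1 (k / 3)).ncard := by simp
    _ ≤ _ := by
      refine ncard_le_ncard_of_injOn _ (fun j hj => ?_) hinj
        ((pFun_zeros_finite k).subset fun z hz => hz.2)
      exact ⟨⟨ψ j, (hψ j hj).2.2.1, rfl⟩, (hψ j hj).2.2.2⟩

theorem stmt7 (k : ℕ) (hk : 3 ≤ k) :
    (∀ j : ℕ, 1 ≤ j → j ≤ k / 3 →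
      ∃ φ : ℝ,
        Real.pi * ((k : ℝ) - ((k / 3 : ℕ) : ℝ) + (j : ℝ) - 1) / (k : ℝ) < φ ∧
        φ < Real.pi * ((k : ℝ) - ((k / 3 : ℕ) : ℝ) + (j : ℝ)) / (k : ℝ) ∧
        pFun k (1 + Complex.exp (φ * Complex.I)) = 0) ∧
    (k / 3 : ℕ) ≤
      {z : ℂ | (∃ φ ∈ Set.Icc (2 * Real.pi / 3) Real.pi,
        z = 1 + Complex.exp (φ * Complex.I)) ∧ pFun k z = 0}.ncard :=
  stmt7_general k
end

section
/- For all real a, b with 2π/3 ≤ a ≤ b ≤ π, the proportion #{φ ∈ [a,b] : p_{2k}(1 + e^{iφ}) = 0} / ⌊k/3⌋ tends to 3(b−a)/π as k → ∞; that is, the zeros of p_{2k} on the arc {1 + e^{iφ} : φ ∈ [2π/3, π]} become equidistributed as k → ∞. -/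
open scoped Real

/-!
On the arc, `p_{2k}(1 + e^{iφ}) = e^{ikφ} (2 cos kφ + c^{2k})` with `c = 2 cos (φ/2) ∈ [0, 1]`
for `φ ∈ [2π/3, π]`. The real factor therefore has the sign of `(-1)^j` at `φ = jπ/k`, so it
vanishes in every interval `(jπ/k, (j+1)π/k)` inside `[a, b]`. It vanishes only once there: at a
zero, `cos kφ = -c^{2k}/2` forces `|sin (φ/2) c^{2k-1}| < |sin kφ|`, so the derivative has the
sign of `(-1)^(j+1)`, and a continuous function crossing zero always in the same direction has
at most one zero on an interval. Hence the number of zeros is `k (b - a)/π + O(1)`, while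
`⌊k/3⌋ ∼ k/3`.
-/

open Set Filter Topology Complex

theorem HasDerivAt.eventually_pos_right {f : ℝ → ℝ} {f' x : ℝ} (hf : HasDerivAt f f' x)
    (hf' : 0 < f') (hx : f x = 0) : ∀ᶠ y in 𝓝[>] x, 0 < f y := by
  have hslope := (hasDerivAt_iff_tendsto_slope_left_right.1 hf).2
  filter_upwards [hslope.eventually (lt_mem_nhds hf'), self_mem_nhdsWithin] with y hy hxy
  rw [slope_def_field, hx, sub_zero] at hy
  exact (div_pos_iff_of_pos_right (sub_pos.2 hxy)).1 hy

theorem HasDerivAt.eventually_neg_left {f : ℝ → ℝ} {f' x : ℝ} (hf : HasDerivAt f f' x)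
    (hf' : 0 < f') (hx : f x = 0) : ∀ᶠ y in 𝓝[<] x, f y < 0 := by
  have hslope := (hasDerivAt_iff_tendsto_slope_left_right.1 hf).1
  filter_upwards [hslope.eventually (lt_mem_nhds hf'), self_mem_nhdsWithin] with y hy hxy
  rw [slope_def_field, hx, sub_zero] at hy
  exact ((div_pos_iff.1 hy).resolve_left fun h => h.2.not_gt (sub_neg.2 hxy)).1

theorem subsingleton_zeros_of_hasDerivAt_pos {f : ℝ → ℝ} {s : Set ℝ} (hs : s.OrdConnected)
    (hf : ContinuousOn f s) (hder : ∀ x ∈ s, f x = 0 → ∃ d, 0 < d ∧ HasDerivAt f d x) :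
    {x ∈ s | f x = 0}.Subsingleton := by
  suffices key : ∀ x ∈ s, ∀ y ∈ s, f x = 0 → f y = 0 → ¬ x < y by
    intro x ⟨hxs, hx⟩ y ⟨hys, hy⟩
    by_contra hne
    rcases lt_or_gt_of_ne hne with hlt | hlt
    exacts [key x hxs y hys hx hy hlt, key y hys x hxs hy hx hlt]
  intro x hxs y hys hx hy hxy
  obtain ⟨dy, hdy, hfy⟩ := hder y hys hy
  obtain ⟨q, hfq, hq⟩ :=
    ((hfy.eventually_neg_left hdy hy).and (Ioo_mem_nhdsLT hxy)).exists
  have hsub : Icc x q ⊆ s := (hs.out hxs hys).trans' (Icc_subset_Icc_right hq.2.le)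
  set T := {t ∈ Icc x q | 0 ≤ f t}
  have hTclosed : IsClosed T :=
    (hf.mono hsub).preimage_isClosed_of_isClosed isClosed_Icc isClosed_Ici
  have hxT : x ∈ T := ⟨left_mem_Icc.2 hq.1.le, hx.ge⟩
  have hTbdd : BddAbove T := ⟨q, fun t ht => ht.1.2⟩
  set z := sSup T
  have hzT : z ∈ T := hTclosed.csSup_mem ⟨x, hxT⟩ hTbdd
  have hzq : z < q := lt_of_le_of_ne hzT.1.2 fun h => by linarith [hzT.2, h ▸ hfq]
  have hneg : ∀ t ∈ Ioc z q, f t < 0 := fun t ht =>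
    not_le.1 fun h => (le_csSup hTbdd ⟨⟨hzT.1.1.trans ht.1.le, ht.2⟩, h⟩).not_gt ht.1
  have hfz : f z = 0 := by
    refine le_antisymm (not_lt.1 fun hpos => ?_) hzT.2
    obtain ⟨t, ht, hft⟩ := intermediate_value_Ioo' hzq.le
      (hf.mono ((Icc_subset_Icc_left hzT.1.1).trans hsub)) ⟨hfq, hpos⟩
    exact (hneg t ⟨ht.1, ht.2.le⟩).ne hft
  obtain ⟨dz, hdz, hfz'⟩ := hder z (hsub hzT.1) hfz
  obtain ⟨t, hft, ht⟩ := ((hfz'.eventually_pos_right hdz hfz).and (Ioo_mem_nhdsGT hzq)).exists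
  exact (hneg t ⟨ht.1, ht.2.le⟩).not_gt hft

section Counting

variable {S : Set ℝ} {A B δ : ℝ}

theorem Set.finite_and_ncard_le_of_subsingleton_Ico (hδ : 0 < δ) (hA : 0 ≤ A) (hAB : A ≤ B)
    (hS : S ⊆ Icc A B) (h : ∀ j : ℕ, (S ∩ Ico (j * δ) ((j + 1) * δ)).Subsingleton) :
    S.Finite ∧ (S.ncard : ℝ) ≤ (B - A) / δ + 2 := by
  set idx : ℝ → ℕ := fun t => ⌊t / δ⌋₊
  have hmem : ∀ t ∈ S, t ∈ Ico (idx t * δ) ((idx t + 1) * δ) := fun t ht =>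
    ⟨(le_div_iff₀ hδ).1 (Nat.floor_le (div_nonneg (hA.trans (hS ht).1) hδ.le)),
      (div_lt_iff₀ hδ).1 (Nat.lt_floor_add_one _)⟩
  have hinj : InjOn idx S := fun s hs t ht hst =>
    h (idx s) ⟨hs, hmem s hs⟩ ⟨ht, hst ▸ hmem t ht⟩
  have hmaps : MapsTo idx S (Finset.Icc ⌊A / δ⌋₊ ⌊B / δ⌋₊ : Set ℕ) := fun t ht => by
    rw [Finset.coe_Icc]
    exact ⟨Nat.floor_le_floor (by gcongr; exact (hS ht).1),
      Nat.floor_le_floor (by gcongr; exact (hS ht).2)⟩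
  refine ⟨((Finset.finite_toSet _).subset hmaps.image_subset).of_finite_image hinj, ?_⟩
  have hcard : S.ncard ≤ ⌊B / δ⌋₊ + 1 - ⌊A / δ⌋₊ := by
    simpa using ncard_le_ncard_of_injOn idx hmaps hinj
  have hfloor : ⌊A / δ⌋₊ ≤ ⌊B / δ⌋₊ + 1 :=
    (Nat.floor_le_floor (div_le_div_of_nonneg_right hAB hδ.le)).trans (Nat.le_succ _)
  have hB : (⌊B / δ⌋₊ : ℝ) ≤ B / δ := Nat.floor_le (div_nonneg (hA.trans hAB) hδ.le)
  have hA' : A / δ < ⌊A / δ⌋₊ + 1 := Nat.lt_floor_add_one _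
  have : (S.ncard : ℝ) ≤ ⌊B / δ⌋₊ + 1 - ⌊A / δ⌋₊ := by
    rw [← Nat.cast_add_one, ← Nat.cast_sub hfloor]
    exact_mod_cast hcard
  rw [sub_div]
  linarith

theorem Set.le_ncard_of_nonempty_Ioo (hδ : 0 < δ) (hA : 0 ≤ A) (hfin : S.Finite)
    (h : ∀ j : ℕ, A ≤ j * δ → (j + 1) * δ ≤ B → (S ∩ Ioo (j * δ) ((j + 1) * δ)).Nonempty) :
    (B - A) / δ - 2 ≤ S.ncard := by
  set J : Set ℕ := ↑(Finset.Ico ⌈A / δ⌉₊ ⌊B / δ⌋₊)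
  have hex : ∀ j ∈ J, ∃ t, t ∈ S ∩ Ioo (j * δ) ((j + 1) * δ) := by
    intro j hj
    simp only [J, Finset.coe_Ico, mem_Ico] at hj
    refine h j ((div_le_iff₀ hδ).1 (Nat.ceil_le.1 hj.1)) ((le_div_iff₀ hδ).1 ?_)
    exact_mod_cast (Nat.le_floor_iff' (Nat.succ_ne_zero j)).1 hj.2
  choose! pt hpt using hex
  have hidx : ∀ j ∈ J, ⌊pt j / δ⌋₊ = j := fun j hj => by
    obtain ⟨hlo, hhi⟩ := (hpt j hj).2
    have hlo' : (j : ℝ) ≤ pt j / δ := (le_div_iff₀ hδ).2 hlo.le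
    exact (Nat.floor_eq_iff (j.cast_nonneg.trans hlo')).2 ⟨hlo', (div_lt_iff₀ hδ).2 hhi⟩
  have hinj : InjOn pt J := fun i hi j hj hij => by
    rw [← hidx i hi, hij, hidx j hj]
  have hcard : ⌊B / δ⌋₊ - ⌈A / δ⌉₊ ≤ S.ncard := by
    simpa [J] using ncard_le_ncard_of_injOn pt (fun j hj => (hpt j hj).1) hinj hfin
  have hsub : (⌊B / δ⌋₊ : ℝ) ≤ S.ncard + ⌈A / δ⌉₊ := by
    exact_mod_cast (Nat.sub_le_iff_le_add.1 hcard)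
  have hB : B / δ < ⌊B / δ⌋₊ + 1 := Nat.lt_floor_add_one _
  have hA' : (⌈A / δ⌉₊ : ℝ) < A / δ + 1 := Nat.ceil_lt_add_one (div_nonneg hA hδ.le)
  rw [sub_div]
  linarith

end Counting

theorem tendsto_div_nat_div_three {u : ℕ → ℝ} {L C : ℝ}
    (h : ∀ᶠ k in atTop, |u k - k * L| ≤ C) :
    Tendsto (fun k : ℕ => u k / ((k / 3 : ℕ) : ℝ)) atTop (𝓝 (3 * L)) := by
  have hu : Tendsto (fun k : ℕ => u k / k) atTop (𝓝 L) := by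
    rw [tendsto_iff_norm_sub_tendsto_zero]
    refine squeeze_zero' (Eventually.of_forall fun _ => norm_nonneg _) ?_
      (tendsto_const_div_atTop_nhds_zero_nat C)
    filter_upwards [h, eventually_gt_atTop 0] with k hk hk0
    have hk0' : (k : ℝ) ≠ 0 := Nat.cast_ne_zero.2 hk0.ne'
    rw [Real.norm_eq_abs, show u k / k - L = (u k - k * L) / k by field_simp, abs_div,
      Nat.abs_cast]
    exact div_le_div_of_nonneg_right hk k.cast_nonneg
  have hthird : Tendsto (fun k : ℕ => ((k / 3 : ℕ) : ℝ) / (k / 3)) atTop (𝓝 1) := by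
    simpa [Function.comp_def, Nat.floor_div_ofNat] using
      (tendsto_nat_floor_div_atTop (R := ℝ)).comp
        (tendsto_natCast_atTop_atTop.atTop_div_const (r := (3 : ℝ)) three_pos)
  have := hu.mul ((hthird.inv₀ one_ne_zero).const_mul 3)
  rw [inv_one, mul_one, mul_comm] at this
  refine this.congr' ?_
  filter_upwards [eventually_ne_atTop 0] with k hk
  rw [inv_div, mul_div_assoc', mul_div_cancel₀ _ three_ne_zero,
    div_mul_div_cancel₀ (Nat.cast_ne_zero.2 hk)]

theorem Real.neg_one_pow_mul_sin_pos {x : ℝ} {j : ℕ} (hx : x ∈ Ioo (j * π) ((j + 1) * π)) :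
    0 < (-1) ^ j * Real.sin x := by
  have hpos : 0 < Real.sin (x - j * π) :=
    Real.sin_pos_of_pos_of_lt_pi (by linarith [hx.1]) (by linarith [hx.2])
  rw [← sub_add_cancel x (j * π), Real.sin_add_nat_mul_pi, ← mul_assoc, ← pow_add, ← two_mul,
    pow_mul]
  simpa using hpos

theorem two_cos_half_mem_Icc {φ : ℝ} (hφ : φ ∈ Icc (2 * π / 3) π) :
    2 * Real.cos (φ / 2) ∈ Icc 0 1 := by
  have hπ := Real.pi_pos
  have hcos := Real.cos_le_cos_of_nonneg_of_le_pi (by positivity : 0 ≤ π / 3)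
    (by linarith [hφ.2]) (by linarith [hφ.1] : π / 3 ≤ φ / 2)
  have hcos0 := Real.cos_nonneg_of_mem_Icc (x := φ / 2)
    ⟨by linarith [hφ.1], by linarith [hφ.2]⟩
  rw [Real.cos_pi_div_three] at hcos
  exact ⟨by linarith, by linarith⟩

theorem abs_two_cos_half_lt_one {φ : ℝ} (hφ : φ ∈ Ioc (2 * π / 3) π) :
    |2 * Real.cos (φ / 2)| < 1 := by
  have hcos := Real.cos_lt_cos_of_nonneg_of_le_pi (by positivity : 0 ≤ π / 3)
    (by linarith [hφ.2, Real.pi_pos]) (by linarith [hφ.1] : π / 3 < φ / 2)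
  rw [Real.cos_pi_div_three] at hcos
  rw [abs_of_nonneg (two_cos_half_mem_Icc (Ioc_subset_Icc_self hφ)).1]
  linarith

theorem one_add_exp_mul_I (θ : ℝ) :
    1 + exp (θ * I) = exp ((θ / 2 : ℝ) * I) * (2 * Real.cos (θ / 2) : ℝ) := by
  push_cast
  rw [cos, mul_div_cancel₀ _ two_ne_zero, mul_add, ← exp_add, ← exp_add,
    show (θ : ℂ) / 2 * I + θ / 2 * I = θ * I by ring,
    show (θ : ℂ) / 2 * I + -(θ / 2) * I = 0 by ring, exp_zero, add_comm]

noncomputable def pArc (k : ℕ) (φ : ℝ) : ℝ :=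
  2 * Real.cos (k * φ) + (2 * Real.cos (φ / 2)) ^ (2 * k)

theorem pFun_one_add_exp (k : ℕ) (φ : ℝ) :
    pFun k (1 + exp (φ * I)) = exp ((k * φ : ℝ) * I) * pArc k φ := by
  have hexp : ∀ (n : ℕ) (θ : ℝ), exp (θ * I) ^ n = exp ((n * θ : ℝ) * I) := fun n θ => by
    rw [← exp_nat_mul]; push_cast; ring_nf
  have h1 : (1 + exp (φ * I)) ^ (2 * k) =
      exp ((k * φ : ℝ) * I) * ((2 * Real.cos (φ / 2)) ^ (2 * k) : ℝ) := by
    rw [one_add_exp_mul_I, mul_pow, hexp]; push_cast; ring_nf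
  have h2 : 1 + (1 - (1 + exp (φ * I))) ^ (2 * k) =
      exp ((k * φ : ℝ) * I) * (2 * Real.cos (k * φ) : ℝ) := by
    rw [sub_add_cancel_left, (even_two_mul k).neg_pow, hexp, one_add_exp_mul_I]
    push_cast; ring_nf
  rw [pFun, pArc, add_right_comm, h1, h2]
  push_cast; ring

theorem pFun_one_add_exp_eq_zero_iff (k : ℕ) (φ : ℝ) :
    pFun k (1 + exp (φ * I)) = 0 ↔ pArc k φ = 0 := by
  rw [pFun_one_add_exp, mul_eq_zero, ofReal_eq_zero]
  simp [exp_ne_zero]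

namespace pArc

theorem continuous (k : ℕ) : Continuous (pArc k) := by
  unfold pArc; fun_prop

theorem hasDerivAt (k : ℕ) (φ : ℝ) :
    HasDerivAt (pArc k) (-2 * k *
      (Real.sin (k * φ) + Real.sin (φ / 2) * (2 * Real.cos (φ / 2)) ^ (2 * k - 1))) φ := by
  have := (((hasDerivAt_id φ).const_mul (k : ℝ)).cos.const_mul 2).add
    ((((hasDerivAt_id φ).div_const 2).cos.const_mul 2).pow (2 * k))
  exact this.congr_deriv (by simp only [id]; push_cast; ring)

end pArc

theorem one_le_neg_one_pow_mul_pArc {k j : ℕ} {φ : ℝ} (hφ : φ ∈ Icc (2 * π / 3) π)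
    (hj : k * φ = j * π) : 1 ≤ (-1) ^ j * pArc k φ := by
  obtain ⟨hc0, hc1⟩ := two_cos_half_mem_Icc hφ
  have hpow : (2 * Real.cos (φ / 2)) ^ (2 * k) ≤ 1 := pow_le_one₀ hc0 hc1
  have hpow0 : 0 ≤ (2 * Real.cos (φ / 2)) ^ (2 * k) := pow_nonneg hc0 _
  rw [pArc, hj, Real.cos_nat_mul_pi]
  rcases neg_one_pow_eq_or ℝ j with h | h <;> rw [h] <;> linarith

theorem pArc_ne_zero_of_mul_eq_nat_mul_pi {k j : ℕ} {φ : ℝ} (hφ : φ ∈ Icc (2 * π / 3) π)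
    (hj : k * φ = j * π) : pArc k φ ≠ 0 := fun hz =>
  (one_le_neg_one_pow_mul_pArc hφ hj).not_gt (by simp [hz])

theorem exists_pArc_eq_zero {k j : ℕ} (hk : k ≠ 0) (hu : 2 * π / 3 ≤ j * (π / k))
    (hv : (j + 1) * (π / k) ≤ π) :
    ∃ φ ∈ Ioo (j * (π / k)) ((j + 1) * (π / k)), pArc k φ = 0 := by
  have hk' : (k : ℝ) ≠ 0 := Nat.cast_ne_zero.2 hk
  have huv : j * (π / k) ≤ (j + 1) * (π / k) := by gcongr; linarith
  have hleft := one_le_neg_one_pow_mul_pArc (k := k) (j := j) ⟨hu, huv.trans hv⟩ (by field_simp)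
  have hright := one_le_neg_one_pow_mul_pArc (k := k) (j := j + 1) ⟨hu.trans huv, hv⟩
    (by push_cast; field_simp)
  rw [pow_succ, mul_neg_one, neg_mul] at hright
  obtain ⟨φ, hφ, hz⟩ := intermediate_value_Ioo' (f := fun φ => (-1) ^ j * pArc k φ) huv
    ((continuous_const.mul (pArc.continuous k)).continuousOn)
    (show (0 : ℝ) ∈ Ioo _ _ from ⟨by linarith, by linarith⟩)
  exact ⟨φ, hφ, (mul_eq_zero.1 hz).resolve_left (pow_ne_zero _ (by norm_num))⟩

theorem sq_mul_lt_sin_sq_of_pArc_eq_zero {k : ℕ} {φ : ℝ} (hk : k ≠ 0)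
    (hc : |2 * Real.cos (φ / 2)| < 1) (hz : pArc k φ = 0) :
    (Real.sin (φ / 2) * (2 * Real.cos (φ / 2)) ^ (2 * k - 1)) ^ 2 < Real.sin (k * φ) ^ 2 := by
  set c := 2 * Real.cos (φ / 2)
  set q := c ^ (2 * k - 1)
  have hq : q ^ 2 < 1 := by
    rw [← sq_abs, abs_pow]
    exact pow_lt_one₀ (pow_nonneg (abs_nonneg _) _)
      (pow_lt_one₀ (abs_nonneg _) hc (by omega)) two_ne_zero
  have hcos : Real.cos (k * φ) = -(q * c) / 2 := by
    rw [pArc, show 2 * k = 2 * k - 1 + 1 by omega, pow_succ] at hz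
    linarith
  have hsin_half : Real.sin (φ / 2) ^ 2 = 1 - c ^ 2 / 4 := by
    rw [Real.sin_sq]; ring
  rw [Real.sin_sq, mul_pow, hsin_half, hcos]
  nlinarith [sq_nonneg c]

theorem subsingleton_pArc_zeros {k : ℕ} (hk : k ≠ 0) (j : ℕ) :
    {φ ∈ Ioo (j * (π / k)) ((j + 1) * (π / k)) ∩ Ioo (2 * π / 3) π |
      pArc k φ = 0}.Subsingleton := by
  have hk' : (0 : ℝ) < k := Nat.cast_pos.2 (Nat.pos_of_ne_zero hk)
  have hσ : ((-1 : ℝ) ^ j) ^ 2 = 1 := by rw [← pow_mul, pow_mul', neg_one_sq, one_pow]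
  have hzero : ∀ φ, (-1 : ℝ) ^ (j + 1) * pArc k φ = 0 ↔ pArc k φ = 0 := fun φ => by simp
  simp only [← hzero]
  refine subsingleton_zeros_of_hasDerivAt_pos (ordConnected_Ioo.inter ordConnected_Ioo)
    (continuous_const.mul (pArc.continuous k)).continuousOn fun φ hφ hz => ?_
  obtain ⟨⟨hφj₁, hφj₂⟩, hφ23, hφπ⟩ := hφ
  rw [← mul_div_assoc, div_lt_iff₀' hk'] at hφj₁
  rw [← mul_div_assoc, lt_div_iff₀' hk'] at hφj₂
  have hsin := Real.neg_one_pow_mul_sin_pos ⟨hφj₁, hφj₂⟩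
  have hsq := sq_mul_lt_sin_sq_of_pArc_eq_zero hk (abs_two_cos_half_lt_one ⟨hφ23, hφπ.le⟩)
    ((hzero φ).1 hz)
  obtain ⟨hlo, hhi⟩ :=
    abs_lt_of_sq_lt_sq' (hsq.trans_eq (by rw [mul_pow, hσ, one_mul])) hsin.le
  refine ⟨_, ?_, (pArc.hasDerivAt k φ).const_mul _⟩
  rw [pow_succ]
  rcases neg_one_pow_eq_or ℝ j with h | h <;> rw [h] at hlo hhi ⊢ <;> nlinarith

theorem abs_ncard_pArc_zeros_sub_le {k : ℕ} (hk : k ≠ 0) {a b : ℝ} (ha : 2 * π / 3 ≤ a)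
    (hab : a ≤ b) (hb : b ≤ π) :
    |({φ : ℝ | φ ∈ Icc a b ∧ pArc k φ = 0}.ncard : ℝ) - k * ((b - a) / π)| ≤ 3 := by
  set Z := {φ : ℝ | φ ∈ Icc a b ∧ pArc k φ = 0}
  -- `φ = 2π/3`, where `2 cos (φ/2) = 1`, may be a zero not covered by the derivative argument
  set Z' := Z ∩ Ioi (2 * π / 3)
  have hδ : 0 < π / k := div_pos Real.pi_pos (Nat.cast_pos.2 (Nat.pos_of_ne_zero hk))
  have ha0 : 0 ≤ a := by linarith [Real.pi_pos]
  have hscale : (b - a) / (π / k) = k * ((b - a) / π) := by field_simp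
  have hbranch :
      ∀ j : ℕ, (Z' ∩ Ico (j * (π / k)) ((j + 1) * (π / k))).Subsingleton := fun j =>
    (subsingleton_pArc_zeros hk j).anti fun φ ⟨⟨⟨hφab, hz⟩, hφ23⟩, hφj⟩ => by
      have hφI : φ ∈ Icc (2 * π / 3) π := ⟨ha.trans hφab.1, hφab.2.trans hb⟩
      refine ⟨⟨⟨hφj.1.lt_of_ne fun h => ?_, hφj.2⟩, hφ23, hφI.2.lt_of_ne fun h => ?_⟩, hz⟩
      · exact pArc_ne_zero_of_mul_eq_nat_mul_pi (j := j) hφI (by rw [← h]; field_simp) hz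
      · exact pArc_ne_zero_of_mul_eq_nat_mul_pi (j := k) hφI (by rw [h]) hz
  obtain ⟨hfin', hup⟩ :=
    Set.finite_and_ncard_le_of_subsingleton_Ico hδ ha0 hab (fun φ hφ => hφ.1.1) hbranch
  have hZ : Z ⊆ insert (2 * π / 3) Z' := fun φ hφ =>
    (ha.trans hφ.1.1).eq_or_lt.imp Eq.symm fun h => ⟨hφ, h⟩
  have hfin : Z.Finite := (hfin'.insert _).subset hZ
  have hup' : Z.ncard ≤ Z'.ncard + 1 :=
    (ncard_le_ncard hZ (hfin'.insert _)).trans (ncard_insert_le _ _)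
  have hlo : (b - a) / (π / k) - 2 ≤ Z'.ncard :=
    Set.le_ncard_of_nonempty_Ioo hδ ha0 hfin' fun j hj₁ hj₂ => by
      obtain ⟨φ, hφ, hz⟩ := exists_pArc_eq_zero hk (ha.trans hj₁) (hj₂.trans hb)
      exact ⟨φ, ⟨⟨⟨hj₁.trans hφ.1.le, hφ.2.le.trans hj₂⟩, hz⟩, (ha.trans hj₁).trans_lt hφ.1⟩,
        hφ⟩
  have hlo' : Z'.ncard ≤ Z.ncard := ncard_le_ncard inter_subset_left hfin
  rw [← hscale, abs_sub_le_iff]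
  constructor
  · have : (Z.ncard : ℝ) ≤ Z'.ncard + 1 := by exact_mod_cast hup'
    linarith
  · have : (Z'.ncard : ℝ) ≤ Z.ncard := by exact_mod_cast hlo'
    linarith

theorem stmt8 (a b : ℝ) (ha : 2 * Real.pi / 3 ≤ a) (hab : a ≤ b) (hb : b ≤ Real.pi) :
    Filter.Tendsto
      (fun k : ℕ =>
        (({φ : ℝ | φ ∈ Set.Icc a b ∧
            pFun k (1 + Complex.exp (φ * Complex.I)) = 0}.ncard : ℝ) / ((k / 3 : ℕ) : ℝ)))
      Filter.atTop (nhds (3 * (b - a) / Real.pi)) := by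
  rw [mul_div_assoc]
  refine tendsto_div_nat_div_three (C := 3) ?_
  filter_upwards [eventually_ne_atTop 0] with k hk
  simpa only [pFun_one_add_exp_eq_zero_iff] using abs_ncard_pArc_zeros_sub_le hk ha hab hb
end

section
/- There exist constants C > 0 and Y > 0 such that for all real y ≥ Y, |Im(λ(1/2 + iy)) − 16·e^{−πy}| ≤ C·e^{−3πy}. -/
open scoped Real

/-- The modular lambda function. -/
noncomputable def modularLambda (τ : ℂ) : ℂ := theta2 τ ^ 4 / theta3 τ ^ 4

/-! With the nome `q = exp (π i τ)`, the leading terms of the theta series give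
`θ₂ = 2 q^{1/4} + O(|q|^{9/4})` and `θ₃ = 1 + 2q + O(|q|⁴)`, hence the `q`-expansion
`λ = 16q - 128q² + O(|q|³)`. At `τ = 1/2 + iy` the nome `q = i e^{-πy}` is purely imaginary, so
`q²` is real and `Im λ = 16 e^{-πy} + O(e^{-3πy})`. -/

open Complex

lemma norm_pow_sub_pow_le {R : Type*} [NormedCommRing R] [NormOneClass R] {a b : R} {M : ℝ}
    (ha : ‖a‖ ≤ M) (hb : ‖b‖ ≤ M) (n : ℕ) :
    ‖a ^ n - b ^ n‖ ≤ n * M ^ (n - 1) * ‖a - b‖ := by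
  rw [← geom_sum₂_mul]
  refine (norm_mul_le _ _).trans (mul_le_mul_of_nonneg_right ?_ (norm_nonneg _))
  have hM : 0 ≤ M := (norm_nonneg _).trans ha
  calc ‖∑ i ∈ Finset.range n, a ^ i * b ^ (n - 1 - i)‖
      ≤ ∑ i ∈ Finset.range n, ‖a ^ i * b ^ (n - 1 - i)‖ := norm_sum_le _ _
    _ ≤ ∑ i ∈ Finset.range n, M ^ (n - 1) := Finset.sum_le_sum fun i hi => ?_
    _ = n * M ^ (n - 1) := by simp
  calc ‖a ^ i * b ^ (n - 1 - i)‖ ≤ ‖a‖ ^ i * ‖b‖ ^ (n - 1 - i) :=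
        (norm_mul_le _ _).trans (mul_le_mul (norm_pow_le _ _) (norm_pow_le _ _)
          (norm_nonneg _) (by positivity))
    _ ≤ M ^ i * M ^ (n - 1 - i) := by gcongr
    _ = M ^ (n - 1) := by
        rw [← pow_add]; congr 1; have := Finset.mem_range.1 hi; omega

lemma Real.exp_neg_mul_le_mul_pow {c a x : ℝ} (hc : 0 ≤ c) (n : ℕ) (h : a + n ≤ x) :
    Real.exp (-(c * x)) ≤ Real.exp (-(c * a)) * Real.exp (-c) ^ n := by
  rw [← Real.exp_nat_mul, ← Real.exp_add]
  exact Real.exp_le_exp.2 (by nlinarith)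

lemma norm_cexp_pi_I_mul (τ : ℂ) (x : ℝ) :
    ‖cexp (π * I * τ * x)‖ = Real.exp (-(π * τ.im * x)) := by
  rw [norm_exp]
  congr 1
  simp

lemma Real.exp_neg_pi_mul_le_one_div_twenty {s : ℝ} (hs : 1 ≤ s) :
    Real.exp (-(π * s)) ≤ 1 / 20 := by
  have h3 : 20 ≤ Real.exp 3 := by
    calc (20 : ℝ) ≤ 2.7182818283 ^ 3 := by norm_num
      _ ≤ Real.exp 1 ^ 3 := by gcongr; exact Real.exp_one_gt_d9.le
      _ = Real.exp 3 := by rw [← Real.exp_nat_mul]; norm_num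
  calc Real.exp (-(π * s)) ≤ Real.exp (-3) :=
        Real.exp_le_exp.2 (by nlinarith [Real.pi_gt_three])
    _ = (Real.exp 3)⁻¹ := Real.exp_neg 3
    _ ≤ 1 / 20 := by rw [one_div]; exact inv_anti₀ (by norm_num) h3

section

variable {τ : ℂ}

lemma norm_theta2_sub_le (hτ : 0 < τ.im) :
    ‖theta2 τ - 2 * cexp (π * I * τ / 4)‖ ≤
      2 * ‖cexp (π * I * τ / 4)‖ * Real.exp (-(π * τ.im)) ^ 2 /
        (1 - Real.exp (-(π * τ.im))) := by
  set g : ℤ → ℂ := fun n => cexp (π * I * τ * ((n : ℂ) + 1 / 2) ^ 2)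
  have hg : Summable g :=
    (((summable_jacobiTheta₂_term_iff (τ / 2) τ).2 hτ).mul_left (cexp (π * I * τ / 4))).congr
      fun n => by simp only [jacobiTheta₂_term, g, ← Complex.exp_add]; ring_nf
  have hg_symm (n : ℕ) : g (-(n + 1)) = g n := by simp only [g]; push_cast; ring_nf
  have hsplit : theta2 τ - 2 * cexp (π * I * τ / 4) = 2 * ∑' n : ℕ, g (n + 1) := by
    rw [theta2, ← tsum_nat_add_neg_add_one hg]
    simp only [hg_symm, ← two_mul]
    have hnat : Summable fun n : ℕ => g n := hg.comp_injective Nat.cast_injective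
    rw [tsum_mul_left, hnat.tsum_eq_zero_add]
    simp [g]; ring_nf
  have hc : 0 ≤ π * τ.im := by positivity
  have hr : Real.exp (-(π * τ.im)) < 1 :=
    Real.exp_lt_one_iff.2 (by linarith [mul_pos Real.pi_pos hτ])
  rw [hsplit, norm_mul, Complex.norm_two, mul_assoc, mul_div_assoc]
  gcongr
  refine tsum_of_norm_bounded ((hasSum_geometric_of_lt_one (Real.exp_pos _).le hr).mul_left
    (‖cexp (π * I * τ / 4)‖ * Real.exp (-(π * τ.im)) ^ 2)) fun n => ?_
  have hgn : g (n + 1) = cexp (π * I * τ * ((((n : ℝ) + 3 / 2) ^ 2 : ℝ) : ℂ)) := by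
    simp only [g]; push_cast; ring_nf
  have hq : cexp (π * I * τ / 4) = cexp (π * I * τ * ((1 / 4 : ℝ) : ℂ)) := by
    push_cast; ring_nf
  rw [hgn, hq, norm_cexp_pi_I_mul, norm_cexp_pi_I_mul]
  exact (Real.exp_neg_mul_le_mul_pow hc (a := 1 / 4) (n + 2) (by push_cast; nlinarith)).trans_eq
    (by ring)

lemma norm_theta3_sub_le (hτ : 0 < τ.im) :
    ‖theta3 τ - (1 + 2 * cexp (π * I * τ))‖ ≤
      2 * Real.exp (-(π * τ.im)) ^ 4 / (1 - Real.exp (-(π * τ.im))) := by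
  set f : ℤ → ℂ := fun n => cexp (π * I * τ * (n : ℂ) ^ 2)
  have hf : Summable f := ((summable_jacobiTheta₂_term_iff 0 τ).2 hτ).congr fun n => by
    simp only [jacobiTheta₂_term, f]; ring_nf
  have hf_even : f.Even := fun n => by simp [f]
  have htail : Summable fun n : ℕ => f (n + 1) := by
    exact_mod_cast (summable_nat_add_iff 1).2 (hf.comp_injective Nat.cast_injective)
  have hsplit : theta3 τ - (1 + 2 * cexp (π * I * τ)) = 2 * ∑' n : ℕ, f (n + 2) := by
    rw [theta3, tsum_int_eq_zero_add_two_mul_tsum_pnat hf_even hf,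
      tsum_pnat_eq_tsum_succ (f := fun n : ℕ => f n)]
    push_cast
    rw [htail.tsum_eq_zero_add]
    simp [f]; ring_nf
  have hc : 0 ≤ π * τ.im := by positivity
  have hr : Real.exp (-(π * τ.im)) < 1 :=
    Real.exp_lt_one_iff.2 (by linarith [mul_pos Real.pi_pos hτ])
  rw [hsplit, norm_mul, Complex.norm_two, mul_div_assoc]
  gcongr
  refine tsum_of_norm_bounded ((hasSum_geometric_of_lt_one (Real.exp_pos _).le hr).mul_left
    (Real.exp (-(π * τ.im)) ^ 4)) fun n => ?_
  have hfn : f (n + 2) = cexp (π * I * τ * ((((n : ℝ) + 2) ^ 2 : ℝ) : ℂ)) := by simp [f]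
  rw [hfn, norm_cexp_pi_I_mul, ← Real.exp_nat_mul, Nat.cast_ofNat,
    show 4 * -(π * τ.im) = -(π * τ.im * 4) by ring]
  exact Real.exp_neg_mul_le_mul_pow hc n (by nlinarith)

lemma norm_theta2_pow_four_sub_le (hτ : 1 ≤ τ.im) :
    ‖theta2 τ ^ 4 - 16 * cexp (π * I * τ)‖ ≤ 324 * Real.exp (-(π * τ.im)) ^ 3 := by
  have htail := norm_theta2_sub_le (by linarith : 0 < τ.im)
  set r := Real.exp (-(π * τ.im))
  set q₄ := cexp (π * I * τ / 4)
  have hr : r ≤ 1 / 20 := Real.exp_neg_pi_mul_le_one_div_twenty hτ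
  have hr0 : 0 < r := Real.exp_pos _
  have hq₄ : q₄ ^ 4 = cexp (π * I * τ) := by rw [← Complex.exp_nat_mul]; ring_nf
  have hq₄r : ‖q₄‖ ^ 4 = r := by rw [← norm_pow, hq₄, norm_exp]; simp [r]
  have hθ : ‖theta2 τ - 2 * q₄‖ ≤ 3 * ‖q₄‖ * r ^ 2 := by
    refine htail.trans ?_
    rw [div_le_iff₀ (by linarith)]
    nlinarith [mul_nonneg (norm_nonneg q₄) (sq_nonneg r)]
  have hM : ‖theta2 τ‖ ≤ 3 * ‖q₄‖ := by
    have := norm_le_norm_add_norm_sub' (theta2 τ) (2 * q₄)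
    rw [norm_mul, Complex.norm_two] at this
    have hr2 : r ^ 2 ≤ 1 / 3 := by nlinarith
    nlinarith [mul_le_mul_of_nonneg_left hr2 (norm_nonneg q₄)]
  have h2q₄ : ‖2 * q₄‖ ≤ 3 * ‖q₄‖ := by
    rw [norm_mul, Complex.norm_two]; linarith [norm_nonneg q₄]
  calc ‖theta2 τ ^ 4 - 16 * cexp (π * I * τ)‖ = ‖theta2 τ ^ 4 - (2 * q₄) ^ 4‖ := by
        rw [mul_pow, hq₄]; norm_num
    _ ≤ 4 * (3 * ‖q₄‖) ^ 3 * (3 * ‖q₄‖ * r ^ 2) := by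
        refine (norm_pow_sub_pow_le hM h2q₄ 4).trans ?_
        norm_num
        gcongr
    _ = 324 * r ^ 3 := by rw [← hq₄r]; ring

lemma norm_theta3_pow_four_sub_le (hτ : 1 ≤ τ.im) :
    ‖theta3 τ ^ 4 - (1 + 8 * cexp (π * I * τ))‖ ≤ 30 * Real.exp (-(π * τ.im)) ^ 2 := by
  have htail := norm_theta3_sub_le (by linarith : 0 < τ.im)
  set r := Real.exp (-(π * τ.im))
  set q := cexp (π * I * τ)
  have hr : r ≤ 1 / 20 := Real.exp_neg_pi_mul_le_one_div_twenty hτ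
  have hr0 : 0 < r := Real.exp_pos _
  have hqr : ‖q‖ = r := by rw [norm_exp]; simp [r]
  have hθ : ‖theta3 τ - (1 + 2 * q)‖ ≤ 3 * r ^ 4 := by
    refine htail.trans ?_
    rw [div_le_iff₀ (by linarith)]
    nlinarith [pow_pos hr0 4]
  have h1q : ‖1 + 2 * q‖ ≤ 1 + 2 * r := by
    refine (norm_add_le _ _).trans ?_
    rw [norm_one, norm_mul, Complex.norm_two, hqr]
  have hM : ‖theta3 τ‖ ≤ 2 := by
    have := norm_le_norm_add_norm_sub' (theta3 τ) (1 + 2 * q)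
    nlinarith [pow_le_pow_left₀ hr0.le hr 4]
  have hquad : ‖24 + 32 * q + 16 * q ^ 2‖ ≤ 24 + 32 * r + 16 * r ^ 2 := by
    refine (norm_add₃_le ..).trans ?_
    simp only [norm_mul, norm_pow, hqr, Complex.norm_ofNat, le_refl]
  calc ‖theta3 τ ^ 4 - (1 + 8 * q)‖
        = ‖(theta3 τ ^ 4 - (1 + 2 * q) ^ 4) + q ^ 2 * (24 + 32 * q + 16 * q ^ 2)‖ := by ring_nf
    _ ≤ 4 * 2 ^ 3 * (3 * r ^ 4) + r ^ 2 * (24 + 32 * r + 16 * r ^ 2) := by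
        refine (norm_add_le _ _).trans (add_le_add ?_ ?_)
        · refine (norm_pow_sub_pow_le hM (h1q.trans (by linarith)) 4).trans ?_
          norm_num
          linarith
        · rw [norm_mul, norm_pow, hqr]
          gcongr
    _ ≤ 30 * r ^ 2 := by
        have hsmall : 112 * r ^ 2 + 32 * r ≤ 6 := by nlinarith
        nlinarith [mul_le_mul_of_nonneg_left hsmall (sq_nonneg r)]

lemma norm_modularLambda_sub_le (hτ : 1 ≤ τ.im) :
    ‖modularLambda τ - (16 * cexp (π * I * τ) - 128 * cexp (π * I * τ) ^ 2)‖ ≤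
      5000 * Real.exp (-(π * τ.im)) ^ 3 := by
  have h2 := norm_theta2_pow_four_sub_le hτ
  have h3 := norm_theta3_pow_four_sub_le hτ
  set r := Real.exp (-(π * τ.im))
  set q := cexp (π * I * τ)
  set P := 16 * q - 128 * q ^ 2 with hP_def
  have hr : r ≤ 1 / 20 := Real.exp_neg_pi_mul_le_one_div_twenty hτ
  have hr0 : 0 < r := Real.exp_pos _
  have hqr : ‖q‖ = r := by rw [norm_exp]; simp [r]
  have hP : ‖P‖ ≤ 23 * r := by
    refine (norm_sub_le _ _).trans ?_
    rw [norm_mul, norm_mul, norm_pow, hqr, Complex.norm_ofNat, Complex.norm_ofNat]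
    nlinarith
  have hden : 1 / 2 ≤ ‖theta3 τ ^ 4‖ := by
    have := norm_le_norm_add_norm_sub' (1 + 8 * q) (theta3 τ ^ 4)
    have h18 : 1 - 8 * r ≤ ‖1 + 8 * q‖ := by
      have := norm_le_norm_add_norm_sub' (1 : ℂ) (-(8 * q))
      rw [norm_one, norm_neg, norm_mul, Complex.norm_ofNat, hqr, sub_neg_eq_add] at this
      linarith
    rw [← norm_neg, neg_sub] at h3
    nlinarith
  -- `(16q - 128q²)(1 + 8q) = 16q - 1024q³`, so only the cubic term survives the expansion
  have hnum : ‖theta2 τ ^ 4 - P * theta3 τ ^ 4‖ ≤ 2038 * r ^ 3 := by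
    calc ‖theta2 τ ^ 4 - P * theta3 τ ^ 4‖
          = ‖(theta2 τ ^ 4 - 16 * q) - P * (theta3 τ ^ 4 - (1 + 8 * q)) + 1024 * q ^ 3‖ := by
            rw [hP_def]; ring_nf
      _ ≤ 324 * r ^ 3 + 23 * r * (30 * r ^ 2) + 1024 * r ^ 3 := by
          refine (norm_add_le _ _).trans (add_le_add ((norm_sub_le _ _).trans
            (add_le_add h2 ?_)) ?_)
          · rw [norm_mul]; gcongr
          · rw [norm_mul, norm_pow, hqr, Complex.norm_ofNat]
      _ = 2038 * r ^ 3 := by ring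
  have hθ3 : theta3 τ ^ 4 ≠ 0 := norm_pos_iff.1 (by linarith)
  rw [modularLambda, div_sub' hθ3, norm_div, div_le_iff₀ (by linarith), mul_comm _ P]
  nlinarith [mul_le_mul_of_nonneg_left hden (by positivity : (0 : ℝ) ≤ 5000 * r ^ 3)]

end

theorem stmt14 :
    ∃ C > (0 : ℝ), ∃ Y > (0 : ℝ),
      ∀ y : ℝ, Y ≤ y →
        |(modularLambda (1 / 2 + y * Complex.I)).im - 16 * Real.exp (-(Real.pi * y))| ≤
          C * Real.exp (-(3 * Real.pi * y)) := by
  refine ⟨5000, by norm_num, 1, one_pos, fun y hy => ?_⟩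
  set τ : ℂ := 1 / 2 + y * I
  set t := Real.exp (-(π * y))
  have hτ : τ.im = y := by simp [τ]
  have hq : cexp (π * I * τ) = t * I := by
    rw [show π * I * τ = (-(π * y) : ℝ) + π / 2 * I by
        simp only [τ]; push_cast; linear_combination (π * y : ℂ) * I_sq,
      Complex.exp_add, ← Complex.ofReal_exp, Complex.exp_pi_div_two_mul_I]
  have key := norm_modularLambda_sub_le (τ := τ) (hτ ▸ hy)
  rw [hq, hτ] at key
  calc |(modularLambda τ).im - 16 * t|
        = |(modularLambda τ - (16 * (t * I) - 128 * (t * I) ^ 2)).im| := by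
          congr 1; simp [pow_two]
    _ ≤ 5000 * t ^ 3 := (abs_im_le_norm _).trans key
    _ = 5000 * Real.exp (-(3 * π * y)) := by rw [← Real.exp_nat_mul]; ring_nf
end

section
/- Let k ≥ 1 be an integer and ρ = e^{iπ/3}. Then p_{2k}(ρ) = 1 + 2·cos(2πk/3) and p_{2k}′(ρ) = 4ik·sin(2πk/3 − π/3). Consequently: if k ≡ 0 (mod 3) then p_{2k}(ρ) = 3 ≠ 0; if k ≡ 1 (mod 3) then p_{2k}(ρ) = 0 and p_{2k}′(ρ) ≠ 0; and if k ≡ 2 (mod 3) then p_{2k}(ρ) = 0 and p_{2k}′(ρ) = 0. -/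
open scoped Real

/-!
Since `ρ = e^{iπ/3}` satisfies `1 - ρ = ρ̄ = e^{-iπ/3}`, we get `p_{2k}(ρ) = 1 + 2 Re ρ^{2k}` and
`p_{2k}'(ρ) = 2k (ρ^{2k-1} - ρ̄^{2k-1}) = 4ik Im ρ^{2k-1}`. Both angles are `2π`-periodic in `k`
modulo `3`, so the three cases reduce to `k = 0, 1, 2`.
-/

open Complex

lemma exp_mul_I_pow (x : ℝ) (n : ℕ) :
    exp (x * I) ^ n = Real.cos (n * x) + Real.sin (n * x) * I := by
  rw [← exp_nat_mul, ← mul_assoc, ← ofReal_natCast, ← ofReal_mul, exp_mul_I, ofReal_cos, ofReal_sin]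

lemma exp_mul_I_pow_add_exp_neg_mul_I_pow (x : ℝ) (n : ℕ) :
    exp (x * I) ^ n + exp (-x * I) ^ n = 2 * Real.cos (n * x) := by
  rw [← ofReal_neg, exp_mul_I_pow, exp_mul_I_pow, mul_neg, Real.cos_neg, Real.sin_neg]
  push_cast; ring

lemma exp_mul_I_pow_sub_exp_neg_mul_I_pow (x : ℝ) (n : ℕ) :
    exp (x * I) ^ n - exp (-x * I) ^ n = 2 * I * Real.sin (n * x) := by
  rw [← ofReal_neg, exp_mul_I_pow, exp_mul_I_pow, mul_neg, Real.cos_neg, Real.sin_neg]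
  push_cast; ring

lemma one_sub_exp_pi_div_three_mul_I :
    1 - exp ((π / 3 : ℝ) * I) = exp (-(π / 3 : ℝ) * I) := by
  rw [exp_mul_I, exp_mul_I, ← ofReal_neg, ← ofReal_cos, ← ofReal_sin, ← ofReal_cos, ← ofReal_sin,
    Real.cos_neg, Real.sin_neg, Real.cos_pi_div_three]
  push_cast; ring

lemma hasDerivAt_pFun (k : ℕ) (z : ℂ) :
    HasDerivAt (pFun k) (2 * k * (z ^ (2 * k - 1) - (1 - z) ^ (2 * k - 1))) z := by
  have h := (((hasDerivAt_id' z).pow (2 * k)).const_add 1).add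
    (((hasDerivAt_id' z).const_sub 1).pow (2 * k))
  exact h.congr_deriv (by push_cast; ring)

lemma exp_pi_div_three_mul_I : exp (π / 3 * I) = exp ((π / 3 : ℝ) * I) := by push_cast; rfl

lemma pFun_exp_pi_div_three (k : ℕ) :
    pFun k (exp (π / 3 * I)) = 1 + 2 * Real.cos (2 * π * k / 3) := by
  rw [pFun, add_assoc, exp_pi_div_three_mul_I, one_sub_exp_pi_div_three_mul_I,
    exp_mul_I_pow_add_exp_neg_mul_I_pow]
  push_cast; ring_nf

lemma deriv_pFun_exp_pi_div_three (k : ℕ) :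
    deriv (pFun k) (exp (π / 3 * I)) = 4 * I * k * Real.sin (2 * π * k / 3 - π / 3) := by
  -- `2 * k - 1` truncates at `k = 0`, where both sides vanish anyway
  rcases Nat.eq_zero_or_pos k with rfl | hk
  · simp [(hasDerivAt_pFun 0 _).deriv]
  rw [(hasDerivAt_pFun k _).deriv, exp_pi_div_three_mul_I, one_sub_exp_pi_div_three_mul_I,
    exp_mul_I_pow_sub_exp_neg_mul_I_pow, Nat.cast_sub (by omega)]
  push_cast; ring_nf

lemma two_pi_mul_div_three_eq_mod (k : ℕ) :
    2 * π * k / 3 = 2 * π * (k % 3 : ℕ) / 3 + (k / 3 : ℕ) * (2 * π) := by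
  conv_lhs => rw [← Nat.mod_add_div k 3]
  push_cast; ring

lemma cos_two_pi_mul_div_three_eq_mod (k : ℕ) :
    Real.cos (2 * π * k / 3) = Real.cos (2 * π * (k % 3 : ℕ) / 3) := by
  rw [two_pi_mul_div_three_eq_mod, Real.cos_add_nat_mul_two_pi]

lemma sin_two_pi_mul_div_three_sub_pi_div_three_eq_mod (k : ℕ) :
    Real.sin (2 * π * k / 3 - π / 3) = Real.sin (2 * π * (k % 3 : ℕ) / 3 - π / 3) := by
  rw [two_pi_mul_div_three_eq_mod, add_sub_right_comm, Real.sin_add_nat_mul_two_pi]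

lemma cos_two_pi_div_three : Real.cos (2 * π / 3) = -(1 / 2) := by
  rw [show 2 * π / 3 = π - π / 3 by ring, Real.cos_pi_sub, Real.cos_pi_div_three]

lemma cos_four_pi_div_three : Real.cos (4 * π / 3) = -(1 / 2) := by
  rw [show 4 * π / 3 = π / 3 + π by ring, Real.cos_add_pi, Real.cos_pi_div_three]

theorem stmt17_general (k : ℕ)
    (ρ : ℂ) (hρ : ρ = Complex.exp (Real.pi / 3 * Complex.I)) :
    pFun k ρ = 1 + 2 * Real.cos (2 * Real.pi * k / 3) ∧
    deriv (pFun k) ρ =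
      4 * Complex.I * (k : ℂ) * Real.sin (2 * Real.pi * k / 3 - Real.pi / 3) ∧
    (k % 3 = 0 → pFun k ρ = 3 ∧ pFun k ρ ≠ 0) ∧
    (k % 3 = 1 → pFun k ρ = 0 ∧ deriv (pFun k) ρ ≠ 0) ∧
    (k % 3 = 2 → pFun k ρ = 0 ∧ deriv (pFun k) ρ = 0) := by
  subst hρ
  have hp := pFun_exp_pi_div_three k
  have hd := deriv_pFun_exp_pi_div_three k
  rw [cos_two_pi_mul_div_three_eq_mod] at hp
  rw [sin_two_pi_mul_div_three_sub_pi_div_three_eq_mod] at hd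
  refine ⟨pFun_exp_pi_div_three k, deriv_pFun_exp_pi_div_three k, fun h => ?_, fun h => ?_,
    fun h => ?_⟩
  · rw [hp, h]
    norm_num
  · have hk : (k : ℂ) ≠ 0 := Nat.cast_ne_zero.mpr (by omega)
    rw [hp, hd, h, Nat.cast_one, mul_one, cos_two_pi_div_three,
      show 2 * π / 3 - π / 3 = π / 3 by ring, Real.sin_pi_div_three]
    refine ⟨by push_cast; ring, by simp [hk]⟩
  · rw [hp, hd, h, Nat.cast_ofNat, show 2 * π * 2 / 3 = 4 * π / 3 by ring, cos_four_pi_div_three,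
      show 4 * π / 3 - π / 3 = π by ring, Real.sin_pi]
    refine ⟨by push_cast; ring, by simp⟩

theorem stmt17 (k : ℕ) (hk : 1 ≤ k)
    (ρ : ℂ) (hρ : ρ = Complex.exp (Real.pi / 3 * Complex.I)) :
    pFun k ρ = 1 + 2 * Real.cos (2 * Real.pi * k / 3) ∧
    deriv (pFun k) ρ =
      4 * Complex.I * (k : ℂ) * Real.sin (2 * Real.pi * k / 3 - Real.pi / 3) ∧
    (k % 3 = 0 → pFun k ρ = 3 ∧ pFun k ρ ≠ 0) ∧
    (k % 3 = 1 → pFun k ρ = 0 ∧ deriv (pFun k) ρ ≠ 0) ∧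
    (k % 3 = 2 → pFun k ρ = 0 ∧ deriv (pFun k) ρ = 0) :=
  stmt17_general k ρ hρ
end
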